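/- For every positive integer n, the optimal pegging number of the hypercube Q_n satisfies (√5 − 1)^n ≤ p(Q_n). -/

import Mathlib

open SimpleGraph Finset

variable {V : Type*} {W : Type*}

/-- A pegging move: remove pegs from adjacent pegged vertices `u, v`,
place a peg on an empty vertex `w` adjacent to `v`. -/
def PegMove {V : Type*} (G : SimpleGraph V) [DecidableEq V] (D D' : Finset V) : Prop :=
  ∃ u v w : V, G.Adj u v ∧ G.Adj v w ∧ u ∈ D ∧ v ∈ D ∧ w ∉ D ∧
    D' = insert w ((D.erase u).erase v)

/-- The reach of a distribution: all vertices reachable by a finite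
sequence of pegging moves. -/
def PegReach {V : Type*} (G : SimpleGraph V) [DecidableEq V] (D : Finset V) : Set V :=
  {t | ∃ D' : Finset V, Relation.ReflTransGen (PegMove G) D D' ∧ t ∈ D'}

/-- The pegging number: least positive `k` such that every distribution of
`k` pegs has full reach. -/
noncomputable def PeggingNumber {V : Type*} (G : SimpleGraph V) [DecidableEq V] : ℕ :=
  sInf {k | 0 < k ∧ ∀ D : Finset V, D.card = k → PegReach G D = Set.univ}

/-- The optimal pegging number: least positive `k` such that some distribution of
`k` pegs has full reach. -/
noncomputable def OptPeggingNumber {V : Type*} (G : SimpleGraph V) [DecidableEq V] : ℕ :=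
  sInf {k | 0 < k ∧ ∃ D : Finset V, D.card = k ∧ PegReach G D = Set.univ}

/-- The hypercube graph `Q n`: binary `n`-tuples, adjacent iff they differ in
exactly one coordinate. -/
def hypercubeGraph (n : ℕ) : SimpleGraph (Fin n → Bool) where
  Adj x y := hammingDist x y = 1
  symm := ⟨fun x y h => by simpa only [hammingDist_comm y x] using h⟩
  loopless := ⟨fun x h => by simp [hammingDist_self] at h⟩

/-!
Weigh a distribution `D` from a target `t` by `∑_{u ∈ D} σ ^ d(u, t)` with `σ = φ⁻¹`, so that
`σ + σ² = 1`. A pegging move `u, v ↦ w` trades `σ ^ d(u,t) + σ ^ d(v,t)` for `σ ^ d(w,t)`, and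
since `d(u,t) ≤ d(v,t) + 1 ≤ d(w,t) + 2` this never increases the weight. A peg on `t` weighs `1`,
so a distribution reaching every vertex has weight at least `1` from each of the `2 ^ n` targets.
Summed over all targets, a single peg weighs `∑ᵢ C(n,i) σ ^ i = φ ^ n`, hence
`|D| ≥ (2 / φ) ^ n = (√5 - 1) ^ n`.
-/

open Real goldenRatio

theorem inv_goldenRatio_pow_eq_add (k : ℕ) : φ⁻¹ ^ k = φ⁻¹ ^ (k + 1) + φ⁻¹ ^ (k + 2) := by
  have h : φ⁻¹ + φ⁻¹ ^ 2 = 1 := by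
    rw [inv_goldenRatio]
    linear_combination goldenConj_sq
  calc φ⁻¹ ^ k = φ⁻¹ ^ k * (φ⁻¹ + φ⁻¹ ^ 2) := by rw [h, mul_one]
    _ = φ⁻¹ ^ (k + 1) + φ⁻¹ ^ (k + 2) := by ring

theorem one_add_inv_goldenRatio : 1 + φ⁻¹ = φ := by
  rw [inv_goldenRatio]
  linear_combination -goldenRatio_add_goldenConj

theorem sqrt_five_sub_one_eq : √5 - 1 = 2 * φ⁻¹ := by
  rw [inv_goldenRatio]
  ring

theorem inv_goldenRatio_pow_le_add {a b c : ℕ} (hab : a ≤ b + 1) (hbc : b ≤ c + 1) :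
    φ⁻¹ ^ c ≤ φ⁻¹ ^ a + φ⁻¹ ^ b := by
  have h0 : 0 ≤ φ⁻¹ := inv_nonneg.2 goldenRatio_pos.le
  have h1 : φ⁻¹ ≤ 1 := inv_le_one_of_one_le₀ one_lt_goldenRatio.le
  have anti : ∀ {m k : ℕ}, m ≤ k → φ⁻¹ ^ k ≤ φ⁻¹ ^ m := fun h => pow_le_pow_of_le_one h0 h1 h
  rcases b with _ | b
  · have : φ⁻¹ ^ c ≤ 1 := pow_le_one₀ h0 h1
    have : 0 ≤ φ⁻¹ ^ a := pow_nonneg h0 a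
    rw [pow_zero]
    linarith
  · calc φ⁻¹ ^ c ≤ φ⁻¹ ^ b := anti (by omega)
      _ = φ⁻¹ ^ (b + 2) + φ⁻¹ ^ (b + 1) := by rw [inv_goldenRatio_pow_eq_add, add_comm]
      _ ≤ φ⁻¹ ^ a + φ⁻¹ ^ (b + 1) := add_le_add (anti (by omega)) le_rfl

section PegWeight

variable [DecidableEq V] {G : SimpleGraph V}

noncomputable def pegWeight (f : V → ℕ) (D : Finset V) : ℝ :=
  ∑ u ∈ D, φ⁻¹ ^ f u

theorem subset_pegReach (D : Finset V) : ↑D ⊆ PegReach G D :=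
  fun _ ht => ⟨D, .refl, ht⟩

theorem pegWeight_le_of_pegMove {f : V → ℕ} (hf : ∀ u v, G.Adj u v → f u ≤ f v + 1)
    {D D' : Finset V} (h : PegMove G D D') : pegWeight f D' ≤ pegWeight f D := by
  obtain ⟨u, v, w, huv, hvw, hu, hv, hw, rfl⟩ := h
  have hv' : v ∈ D.erase u := Finset.mem_erase.2 ⟨huv.ne.symm, hv⟩
  have hw' : w ∉ (D.erase u).erase v := fun h => hw (mem_of_mem_erase (mem_of_mem_erase h))
  have hpow := inv_goldenRatio_pow_le_add (hf u v huv) (hf v w hvw)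
  rw [pegWeight, pegWeight, Finset.sum_insert hw', Finset.sum_erase_eq_sub hv',
    Finset.sum_erase_eq_sub hu]
  linarith

theorem pegWeight_le_of_reflTransGen {f : V → ℕ} (hf : ∀ u v, G.Adj u v → f u ≤ f v + 1)
    {D D' : Finset V} (h : Relation.ReflTransGen (PegMove G) D D') :
    pegWeight f D' ≤ pegWeight f D := by
  induction h with
  | refl => exact le_rfl
  | tail _ hmove ih => exact (pegWeight_le_of_pegMove hf hmove).trans ih

theorem one_le_pegWeight_of_mem_pegReach {f : V → ℕ} (hf : ∀ u v, G.Adj u v → f u ≤ f v + 1)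
    {D : Finset V} {t : V} (ht : t ∈ PegReach G D) (hft : f t = 0) : 1 ≤ pegWeight f D := by
  obtain ⟨D', hD', htD'⟩ := ht
  have hpeg : 1 ≤ pegWeight f D' := by
    have := Finset.single_le_sum (f := fun u => φ⁻¹ ^ f u)
      (fun u _ => pow_nonneg (inv_nonneg.2 goldenRatio_pos.le) _) htD'
    rwa [hft, pow_zero] at this
  exact hpeg.trans (pegWeight_le_of_reflTransGen hf hD')

theorem exists_card_eq_optPeggingNumber [Fintype V] [Nonempty V] (G : SimpleGraph V) :
    ∃ D : Finset V, D.card = OptPeggingNumber G ∧ PegReach G D = Set.univ := by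
  have huniv : PegReach G Finset.univ = Set.univ :=
    Set.eq_univ_of_univ_subset (by simpa using subset_pegReach (G := G) Finset.univ)
  obtain ⟨-, D, hcard, hD⟩ :=
    Nat.sInf_mem (s := {k | 0 < k ∧ ∃ D : Finset V, D.card = k ∧ PegReach G D = Set.univ})
      ⟨_, Finset.univ_nonempty.card_pos, Finset.univ, rfl, huniv⟩
  exact ⟨D, hcard, hD⟩

end PegWeight

theorem hammingDist_le_of_hypercubeGraph_adj {n : ℕ} (t : Fin n → Bool) {u v : Fin n → Bool}
    (h : (hypercubeGraph n).Adj u v) :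
    hammingDist u t ≤ hammingDist v t + 1 := by
  have huv : hammingDist u v = 1 := h
  linarith [hammingDist_triangle u v t]

theorem pow_hammingDist_eq_prod {ι R : Type*} [Fintype ι] [CommMonoid R] (x : R)
    (u t : ι → Bool) : x ^ hammingDist u t = ∏ i, if u i = t i then 1 else x := by
  rw [Finset.prod_ite, Finset.prod_const_one, one_mul, Finset.prod_const, hammingDist]

theorem sum_pow_hammingDist {ι R : Type*} [Fintype ι] [DecidableEq ι] [CommSemiring R] (x : R)
    (u : ι → Bool) : ∑ t : ι → Bool, x ^ hammingDist u t = (1 + x) ^ Fintype.card ι := by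
  rw [Fintype.sum_congr _ _ (pow_hammingDist_eq_prod x u),
    ← Fintype.prod_sum (fun i b => if u i = b then 1 else x), ← Finset.card_univ,
    ← Finset.prod_const]
  refine Finset.prod_congr rfl fun i _ => ?_
  cases u i <;> simp [add_comm]

theorem sqrt_five_sub_one_pow_le_card_of_pegReach_eq_univ {n : ℕ} {D : Finset (Fin n → Bool)}
    (hD : PegReach (hypercubeGraph n) D = Set.univ) : (√5 - 1) ^ n ≤ D.card := by
  have hweight (t : Fin n → Bool) : 1 ≤ pegWeight (hammingDist · t) D :=
    one_le_pegWeight_of_mem_pegReach (fun _ _ => hammingDist_le_of_hypercubeGraph_adj t)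
      (hD ▸ Set.mem_univ t) (hammingDist_self t)
  have htotal : ∑ t, pegWeight (hammingDist · t) D = D.card * φ ^ n := by
    simp only [pegWeight]
    rw [Finset.sum_comm]
    simp_rw [sum_pow_hammingDist, Fintype.card_fin, one_add_inv_goldenRatio, Finset.sum_const,
      nsmul_eq_mul]
  have hcount : (2 : ℝ) ^ n ≤ D.card * φ ^ n := by
    calc (2 : ℝ) ^ n = ∑ _t : Fin n → Bool, (1 : ℝ) := by simp
      _ ≤ ∑ t, pegWeight (hammingDist · t) D := Finset.sum_le_sum fun t _ => hweight t
      _ = D.card * φ ^ n := htotal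
  rw [sqrt_five_sub_one_eq, mul_pow, inv_pow, ← div_eq_mul_inv]
  exact (div_le_iff₀ (pow_pos goldenRatio_pos n)).2 hcount

theorem optPeggingNumber_hypercube_lower_general (n : ℕ) :
    (Real.sqrt 5 - 1) ^ n ≤ (OptPeggingNumber (hypercubeGraph n) : ℝ) := by
  obtain ⟨D, hcard, hD⟩ := exists_card_eq_optPeggingNumber (hypercubeGraph n)
  rw [← hcard]
  exact sqrt_five_sub_one_pow_le_card_of_pegReach_eq_univ hD

theorem optPeggingNumber_hypercube_lower (n : ℕ) (hn : 0 < n) :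
    (Real.sqrt 5 - 1) ^ n ≤ (OptPeggingNumber (hypercubeGraph n) : ℝ) :=
  optPeggingNumber_hypercube_lower_general n
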